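/- arXiv:2407.21261 — 2 statements merged into one kernel-verified Lean document; each statement's English description precedes it below -/
import Mathlib

section
/- Let f ∈ L¹(S) with f ≥ 0 a.e. and f ≠ 0; let f* ∈ J(f) be defined by f* = ‖f‖₁ on {f > 0} and 0 on {f = 0}; and let f** be the functional on L^∞ given by k* ↦ ∫ k* f dμ. Then −f* ∉ D̂*J(f, f*)(f**): along h_t = f − t·χ_D (with D ⊆ {f > a}, 0 < μ(D) < ∞, 0 < t < a) and h_t* ∈ J(h_t) analogous to f*, the quotient (⟨−f*, h_t − f⟩ − ⟨h_t* − f*, f⟩)/(‖h_t − f‖₁ + ‖h_t* − f*‖_∞) converges to ‖f‖₁ > 0. -/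
open MeasureTheory
open scoped ENNReal Topology

variable {S : Type*} [MeasurableSpace S]

/-- The `L¹` norm of a function, `‖h‖₁ = ∫ |h| dμ`. -/
noncomputable def norm1 (μ : Measure S) (h : S → ℝ) : ℝ := ∫ s, |h s| ∂μ

/-- The `L^∞` norm of a function (essential supremum). -/
noncomputable def normInf (μ : Measure S) (h : S → ℝ) : ℝ := (eLpNorm h ⊤ μ).toReal

/-- The normalized duality mapping `J : L¹(S) ⇉ L^∞(S)`:
`J(h) = {g ∈ L^∞ : ⟨g, h⟩ = ‖g‖_∞‖h‖₁ = ‖h‖₁² = ‖g‖_∞²}`. -/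
noncomputable def JsetL1 (μ : Measure S) (h : S → ℝ) : Set (S → ℝ) :=
  {g | MemLp g ⊤ μ ∧ (∫ s, h s * g s ∂μ) = (norm1 μ h) ^ 2 ∧
    eLpNorm g ⊤ μ = ENNReal.ofReal (norm1 μ h)}

/-- `k ∈ D̂*J(f, f*)(γ)`: the regular (Fréchet) coderivative condition
`limsup_{(g,g*)→(f,f*), g*∈J(g)} (⟨k, g-f⟩ - ⟨γ, g*-f*⟩)/(‖g-f‖₁ + ‖g*-f*‖_∞) ≤ 0`. -/
noncomputable def memMDL1 (μ : Measure S) (f fstar : S → ℝ) (γ : (S → ℝ) → ℝ)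
    (k : S → ℝ) : Prop :=
  ∀ ε > (0 : ℝ), ∃ δ > (0 : ℝ), ∀ g gstar : S → ℝ, gstar ∈ JsetL1 μ g →
    norm1 μ (fun s => g s - f s) < δ → normInf μ (fun s => gstar s - fstar s) < δ →
    ((∫ s, k s * (g s - f s) ∂μ) - γ (fun s => gstar s - fstar s)) /
      (norm1 μ (fun s => g s - f s) + normInf μ (fun s => gstar s - fstar s)) ≤ ε

/-!
Along `h_t = f - t·1_D` we have `h_t ≥ 0`, so `‖h_t‖₁ = ‖f‖₁ - t μ(D)` and the dual element
`h_t*` differs from `f*` by the constant `-t μ(D)` on `{f > 0}`. Hence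
`‖h_t - f‖₁ = ‖h_t* - f*‖_∞ = t μ(D)`, while both terms of the numerator equal `t μ(D) ‖f‖₁`:
the quotient is constantly `‖f‖₁`, which is at least `a μ(D) > 0`. Since `(h_t, h_t*) → (f, f*)`
inside the graph of `J`, the limsup defining the coderivative is at least `‖f‖₁`.
-/

open Filter Set

noncomputable def coderivQuotient (μ : Measure S) (f fstar : S → ℝ) (γ : (S → ℝ) → ℝ)
    (k g gstar : S → ℝ) : ℝ :=
  ((∫ s, k s * (g s - f s) ∂μ) - γ (fun s => gstar s - fstar s)) /
    (norm1 μ (fun s => g s - f s) + normInf μ (fun s => gstar s - fstar s))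

variable {μ : Measure S}

lemma norm1_nonneg (h : S → ℝ) : 0 ≤ norm1 μ h :=
  integral_nonneg fun _ => abs_nonneg _

lemma norm1_eq_integral_of_ae_nonneg {h : S → ℝ} (hh : ∀ᵐ s ∂μ, 0 ≤ h s) :
    norm1 μ h = ∫ s, h s ∂μ :=
  integral_congr_ae (hh.mono fun _ hs => abs_of_nonneg hs)

lemma normInf_indicator_const {A : Set S} (hA : μ A ≠ 0) (c : ℝ) :
    normInf μ (A.indicator fun _ => c) = |c| := by
  rw [normInf, eLpNorm_exponent_top, eLpNormEssSup_indicator_const_eq A c hA, toReal_enorm,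
    Real.norm_eq_abs]

lemma ite_pos_eq_indicator {X : Type*} (f : X → ℝ) (c : ℝ) :
    (fun s => if 0 < f s then c else 0) = {s | 0 < f s}.indicator fun _ => c := by
  ext s
  simp [Set.indicator_apply]

lemma integral_indicator_pos_mul {f : S → ℝ} (hf : ∀ᵐ s ∂μ, 0 ≤ f s) (b : ℝ) :
    ∫ s, {s | 0 < f s}.indicator (fun _ => b) s * f s ∂μ = b * norm1 μ f := by
  rw [norm1_eq_integral_of_ae_nonneg hf, ← integral_const_mul]
  refine integral_congr_ae (hf.mono fun s hs => ?_)
  by_cases hpos : 0 < f s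
  · simp [hpos]
  · simp [le_antisymm (not_lt.1 hpos) hs]

lemma indicator_const_mem_JsetL1 {g : S → ℝ} {A : Set S} (hA : NullMeasurableSet A μ)
    (hA0 : μ A ≠ 0) (hg : ∀ᵐ s ∂μ, 0 ≤ g s) (hgA : ∀ᵐ s ∂μ, s ∉ A → g s = 0) :
    A.indicator (fun _ => norm1 μ g) ∈ JsetL1 μ g := by
  have hc : 0 ≤ norm1 μ g := norm1_nonneg g
  refine ⟨memLp_top_of_bound (aestronglyMeasurable_const.indicator₀ hA) (norm1 μ g)
      (ae_of_all _ fun s => ?_), ?_, ?_⟩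
  · rw [Real.norm_eq_abs, abs_of_nonneg (indicator_nonneg (fun _ _ => hc) s)]
    exact indicator_le_self' (fun _ _ => hc) s
  · calc ∫ s, g s * A.indicator (fun _ => norm1 μ g) s ∂μ = ∫ s, norm1 μ g * g s ∂μ := by
          refine integral_congr_ae (hgA.mono fun s hs => ?_)
          by_cases hsA : s ∈ A
          · simp [hsA, mul_comm]
          · simp [hsA, hs hsA]
      _ = norm1 μ g ^ 2 := by
          rw [integral_const_mul, ← norm1_eq_integral_of_ae_nonneg hg, sq]
  · rw [eLpNorm_exponent_top, eLpNormEssSup_indicator_const_eq A _ hA0, ← ofReal_norm,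
      Real.norm_eq_abs, abs_of_nonneg hc]

lemma not_memMDL1_of_tendsto {ι : Type*} {l : Filter ι} [l.NeBot] {f fstar : S → ℝ}
    {γ : (S → ℝ) → ℝ} {k : S → ℝ} {g gstar : ι → S → ℝ} {c : ℝ} (hc : 0 < c)
    (hJ : ∀ᶠ i in l, gstar i ∈ JsetL1 μ (g i))
    (hg : Tendsto (fun i => norm1 μ fun s => g i s - f s) l (𝓝 0))
    (hgstar : Tendsto (fun i => normInf μ fun s => gstar i s - fstar s) l (𝓝 0))
    (hq : Tendsto (fun i => coderivQuotient μ f fstar γ k (g i) (gstar i)) l (𝓝 c)) :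
    ¬ memMDL1 μ f fstar γ k := by
  intro hmem
  obtain ⟨δ, hδ, hquot_le⟩ := hmem (c / 2) (half_pos hc)
  obtain ⟨i, hJi, hgi, hgstari, hqi⟩ := (hJ.and <| (hg.eventually (eventually_lt_nhds hδ)).and <|
    (hgstar.eventually (eventually_lt_nhds hδ)).and
      (hq.eventually (eventually_gt_nhds (half_lt_self hc)))).exists
  exact (hquot_le (g i) (gstar i) hJi hgi hgstari).not_gt hqi

section Perturbation

variable {f fstar : S → ℝ} {D : Set S} {t : ℝ}

lemma norm1_sub_indicator_sub_self (hD : MeasurableSet D) (ht : 0 ≤ t) :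
    norm1 μ (fun s => (f s - t * D.indicator (fun _ => (1 : ℝ)) s) - f s) = t * μ.real D := by
  have habs : ∀ s, |(f s - t * D.indicator (fun _ => (1 : ℝ)) s) - f s|
      = t * D.indicator (fun _ => (1 : ℝ)) s := fun s => by
    rw [sub_sub_cancel_left, abs_neg,
      abs_of_nonneg (mul_nonneg ht (indicator_nonneg (fun _ _ => zero_le_one) s))]
  simp only [norm1, habs]
  rw [integral_const_mul, integral_indicator_const _ hD, smul_eq_mul, mul_one, mul_comm]

lemma ae_nonneg_sub_indicator (hfpos : ∀ᵐ s ∂μ, 0 ≤ f s) (hDt : ∀ s ∈ D, t ≤ f s) :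
    ∀ᵐ s ∂μ, 0 ≤ f s - t * D.indicator (fun _ => (1 : ℝ)) s :=
  hfpos.mono fun s hs => by
    by_cases hsD : s ∈ D
    · simpa [hsD] using hDt s hsD
    · simpa [hsD] using hs

lemma norm1_sub_indicator (hfi : Integrable f μ) (hfpos : ∀ᵐ s ∂μ, 0 ≤ f s)
    (hD : MeasurableSet D) (hDfin : μ D ≠ ∞) (hDt : ∀ s ∈ D, t ≤ f s) :
    norm1 μ (fun s => f s - t * D.indicator (fun _ => (1 : ℝ)) s) = norm1 μ f - t * μ.real D := by
  have hχ : Integrable (D.indicator fun _ => (1 : ℝ)) μ :=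
    (integrable_indicator_iff hD).2 (integrableOn_const hDfin)
  rw [norm1_eq_integral_of_ae_nonneg (ae_nonneg_sub_indicator hfpos hDt),
    norm1_eq_integral_of_ae_nonneg hfpos, integral_sub hfi (hχ.const_mul t), integral_const_mul,
    integral_indicator_const _ hD, smul_eq_mul, mul_one]

lemma sub_fstar_eq_indicator (hfstar : ∀ s, fstar s = if 0 < f s then norm1 μ f else 0)
    (c : ℝ) (s : S) :
    (if 0 < f s then c else 0) - fstar s = {s | 0 < f s}.indicator (fun _ => c - norm1 μ f) s := by
  by_cases hs : 0 < f s <;> simp [hfstar, hs]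

lemma integral_neg_fstar_mul_sub_indicator
    (hfstar : ∀ s, fstar s = if 0 < f s then norm1 μ f else 0) (hD : MeasurableSet D)
    (hDf : D ⊆ {s | 0 < f s}) :
    ∫ s, -fstar s * ((f s - t * D.indicator (fun _ => (1 : ℝ)) s) - f s) ∂μ
      = t * norm1 μ f * μ.real D := by
  have hpt : ∀ s, -fstar s * ((f s - t * D.indicator (fun _ => (1 : ℝ)) s) - f s)
      = t * norm1 μ f * D.indicator (fun _ => (1 : ℝ)) s := fun s => by
    by_cases hsD : s ∈ D
    · simp [hsD, hfstar, show 0 < f s from hDf hsD, mul_comm]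
    · simp [hsD]
  simp only [hpt]
  rw [integral_const_mul, integral_indicator_const _ hD, smul_eq_mul, mul_one]

lemma normInf_sub_fstar_of_sub_indicator (hfi : Integrable f μ) (hfpos : ∀ᵐ s ∂μ, 0 ≤ f s)
    (hfstar : ∀ s, fstar s = if 0 < f s then norm1 μ f else 0) (hD : MeasurableSet D)
    (hD0 : μ D ≠ 0) (hDfin : μ D ≠ ∞) (hDt : ∀ s ∈ D, t < f s) (ht : 0 < t) :
    normInf μ (fun s => (if 0 < f s then
        norm1 μ (fun u => f u - t * D.indicator (fun _ => (1 : ℝ)) u) else 0) - fstar s)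
      = t * μ.real D := by
  have hA0 : μ {s | 0 < f s} ≠ 0 :=
    fun h => hD0 (measure_mono_null (fun s hs => ht.trans (hDt s hs)) h)
  have hM : 0 < μ.real D := ENNReal.toReal_pos hD0 hDfin
  simp only [sub_fstar_eq_indicator hfstar]
  rw [normInf_indicator_const hA0,
    norm1_sub_indicator hfi hfpos hD hDfin fun s hs => (hDt s hs).le, sub_sub_cancel_left,
    abs_neg, abs_of_pos (mul_pos ht hM)]

lemma coderivQuotient_sub_indicator_eq (hfi : Integrable f μ) (hfpos : ∀ᵐ s ∂μ, 0 ≤ f s)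
    (hfstar : ∀ s, fstar s = if 0 < f s then norm1 μ f else 0) (hD : MeasurableSet D)
    (hD0 : μ D ≠ 0) (hDfin : μ D ≠ ∞) (hDt : ∀ s ∈ D, t < f s) (ht : 0 < t) :
    coderivQuotient μ f fstar (fun h => ∫ s, h s * f s ∂μ) (fun s => -fstar s)
      (fun s => f s - t * D.indicator (fun _ => (1 : ℝ)) s)
      (fun s => if 0 < f s then
        norm1 μ (fun u => f u - t * D.indicator (fun _ => (1 : ℝ)) u) else 0)
      = norm1 μ f := by
  have hM : 0 < μ.real D := ENNReal.toReal_pos hD0 hDfin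
  simp only [coderivQuotient]
  rw [norm1_sub_indicator_sub_self hD ht.le,
    integral_neg_fstar_mul_sub_indicator hfstar hD fun s hs => ht.trans (hDt s hs),
    normInf_sub_fstar_of_sub_indicator hfi hfpos hfstar hD hD0 hDfin hDt ht]
  simp only [sub_fstar_eq_indicator hfstar]
  rw [integral_indicator_pos_mul hfpos,
    norm1_sub_indicator hfi hfpos hD hDfin fun s hs => (hDt s hs).le, sub_sub_cancel_left]
  field_simp
  ring

lemma ite_pos_mem_JsetL1_sub_indicator (hfi : Integrable f μ) (hfpos : ∀ᵐ s ∂μ, 0 ≤ f s)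
    (hD0 : μ D ≠ 0) (hDt : ∀ s ∈ D, t < f s) (ht : 0 < t) :
    (fun s => if 0 < f s then
        norm1 μ (fun u => f u - t * D.indicator (fun _ => (1 : ℝ)) u) else 0)
      ∈ JsetL1 μ (fun s => f s - t * D.indicator (fun _ => (1 : ℝ)) s) := by
  have hDf : D ⊆ {s | 0 < f s} := fun s hs => ht.trans (hDt s hs)
  rw [ite_pos_eq_indicator]
  refine indicator_const_mem_JsetL1 (nullMeasurableSet_lt aemeasurable_const hfi.aemeasurable)
    (fun h => hD0 (measure_mono_null hDf h))
    (ae_nonneg_sub_indicator hfpos fun s hs => (hDt s hs).le) ?_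
  filter_upwards [hfpos] with s hs hsA
  have hsD : s ∉ D := fun hsD => hsA (hDf hsD)
  simp [hsD, le_antisymm (not_lt.1 hsA) hs]

end Perturbation

theorem neg_fstar_not_mem_coderivative_L1_general (μ : Measure S)
    (f : S → ℝ) (hfi : Integrable f μ)
    (hfpos : ∀ᵐ s ∂μ, 0 ≤ f s)
    (fstar : S → ℝ)
    (hfstar : ∀ s : S, fstar s = if 0 < f s then norm1 μ f else 0)
    (a : ℝ) (ha : 0 < a)
    (D : Set S) (hD : MeasurableSet D) (hDf : D ⊆ {s | a < f s})
    (hD0 : 0 < μ D) (hDfin : μ D < ⊤) :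
    Filter.Tendsto
      (fun t : ℝ =>
        ((∫ s, (-fstar s) *
            ((f s - t * D.indicator (fun _ => (1 : ℝ)) s) - f s) ∂μ) -
          ∫ s, ((if 0 < f s then
              norm1 μ (fun u => f u - t * D.indicator (fun _ => (1 : ℝ)) u)
            else 0) - fstar s) * f s ∂μ) /
          (norm1 μ (fun s => (f s - t * D.indicator (fun _ => (1 : ℝ)) s) - f s) +
            normInf μ (fun s =>
              (if 0 < f s then
                norm1 μ (fun u => f u - t * D.indicator (fun _ => (1 : ℝ)) u)
              else 0) - fstar s)))
      (𝓝[Set.Ioo 0 a] 0) (𝓝 (norm1 μ f)) ∧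
    0 < norm1 μ f ∧
    ¬ memMDL1 μ f fstar (fun h => ∫ s, h s * f s ∂μ) (fun s => -fstar s) := by
  have hM : 0 < μ.real D := ENNReal.toReal_pos hD0.ne' hDfin.ne
  have hDt : ∀ t ∈ Ioo 0 a, ∀ s ∈ D, t < f s := fun t ht s hs => ht.2.trans (hDf hs)
  have hN : 0 < norm1 μ f := by
    have h0 := norm1_nonneg (μ := μ) fun s => f s - a * D.indicator (fun _ => (1 : ℝ)) s
    rw [norm1_sub_indicator hfi hfpos hD hDfin.ne fun s hs => le_of_lt (hDf hs)] at h0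
    linarith [mul_pos ha hM]
  have hquot : Tendsto (fun t => coderivQuotient μ f fstar (fun h => ∫ s, h s * f s ∂μ)
      (fun s => -fstar s) (fun s => f s - t * D.indicator (fun _ => (1 : ℝ)) s)
      (fun s => if 0 < f s then
        norm1 μ (fun u => f u - t * D.indicator (fun _ => (1 : ℝ)) u) else 0))
      (𝓝[Ioo 0 a] 0) (𝓝 (norm1 μ f)) :=
    tendsto_const_nhds.congr' <| eventually_nhdsWithin_of_forall fun t ht =>
      (coderivQuotient_sub_indicator_eq hfi hfpos hfstar hD hD0.ne' hDfin.ne (hDt t ht) ht.1).symm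
  have hlin : Tendsto (fun t : ℝ => t * μ.real D) (𝓝[Ioo 0 a] 0) (𝓝 0) :=
    tendsto_nhdsWithin_of_tendsto_nhds (by simpa using (continuous_mul_const (μ.real D)).tendsto 0)
  have := left_nhdsWithin_Ioo_neBot ha
  refine ⟨hquot, hN, not_memMDL1_of_tendsto hN ?_ ?_ ?_ hquot⟩
  · exact eventually_nhdsWithin_of_forall fun t ht =>
      ite_pos_mem_JsetL1_sub_indicator hfi hfpos hD0.ne' (hDt t ht) ht.1
  · exact hlin.congr' <| eventually_nhdsWithin_of_forall fun t ht =>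
      (norm1_sub_indicator_sub_self hD ht.1.le).symm
  · exact hlin.congr' <| eventually_nhdsWithin_of_forall fun t ht =>
      (normInf_sub_fstar_of_sub_indicator hfi hfpos hfstar hD hD0.ne' hDfin.ne (hDt t ht) ht.1).symm

/-- let `f ∈ L¹(S)`, `f ≥ 0` a.e., `f ≠ 0`, let
`f* = ‖f‖₁ on {f > 0}`, `0 on {f = 0}` (an element of `J(f)`), and let `f**` be the
functional `k* ↦ ∫ k* f dμ` on `L^∞`.  Then `−f* ∉ D̂*J(f, f*)(f**)`: along
`h_t = f − t χ_D` (where `D ⊆ {f > a}`, `0 < μ D < ∞`, `0 < t < a`) with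
`h_t* ∈ J(h_t)` defined analogously to `f*`, the Mordukhovich quotient converges to
`‖f‖₁ > 0`. -/
theorem neg_fstar_not_mem_coderivative_L1 (μ : Measure S)
    (f : S → ℝ) (hfm : Measurable f) (hfi : Integrable f μ)
    (hfpos : ∀ᵐ s ∂μ, 0 ≤ f s) (hf0 : ¬ (f =ᵐ[μ] 0))
    (fstar : S → ℝ)
    (hfstar : ∀ s : S, fstar s = if 0 < f s then norm1 μ f else 0)
    (a : ℝ) (ha : 0 < a)
    (D : Set S) (hD : MeasurableSet D) (hDf : D ⊆ {s | a < f s})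
    (hD0 : 0 < μ D) (hDfin : μ D < ⊤) :
    Filter.Tendsto
      (fun t : ℝ =>
        ((∫ s, (-fstar s) *
            ((f s - t * D.indicator (fun _ => (1 : ℝ)) s) - f s) ∂μ) -
          ∫ s, ((if 0 < f s then
              norm1 μ (fun u => f u - t * D.indicator (fun _ => (1 : ℝ)) u)
            else 0) - fstar s) * f s ∂μ) /
          (norm1 μ (fun s => (f s - t * D.indicator (fun _ => (1 : ℝ)) s) - f s) +
            normInf μ (fun s =>
              (if 0 < f s then
                norm1 μ (fun u => f u - t * D.indicator (fun _ => (1 : ℝ)) u)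
              else 0) - fstar s)))
      (𝓝[Set.Ioo 0 a] 0) (𝓝 (norm1 μ f)) ∧
    0 < norm1 μ f ∧
    ¬ memMDL1 μ f fstar (fun h => ∫ s, h s * f s ∂μ) (fun s => -fstar s) :=
  neg_fstar_not_mem_coderivative_L1_general μ f hfi hfpos fstar hfstar a ha D hD hDf hD0 hDfin
end

section
/- Let f ∈ C[0,1] with f ≥ 0 and ‖f‖ > 0, let μ ∈ J(f), and let f** ∈ (rca[0,1])* be given by γ ↦ ∫₀¹ f dγ. Then θ* ∉ D̂*J(f, μ)(f**): taking g_t = (1−t)f and γ_t = (1−t)μ ∈ J(g_t), the quotient (−⟨γ_t − μ, f⟩)/(‖g_t − f‖ + ‖γ_t − μ‖) converges to ‖f‖/2 > 0 as t ↓ 0. -/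
open MeasureTheory
open scoped Topology

/-- The unit interval `[0,1]` as a compact metric measurable space. -/
abbrev I01 := Set.Icc (0 : ℝ) 1

/-- Integration of a function against a signed (regular Borel) measure, via its
Jordan decomposition: `∫ f dν = ∫ f dν⁺ − ∫ f dν⁻`. -/
noncomputable def sInt (ν : SignedMeasure I01) (f : I01 → ℝ) : ℝ :=
  (∫ x, f x ∂ν.toJordanDecomposition.posPart) -
    ∫ x, f x ∂ν.toJordanDecomposition.negPart

/-- The total variation norm of a signed measure on `[0,1]`. -/
noncomputable def tvNorm (ν : SignedMeasure I01) : ℝ :=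
  (ν.totalVariation Set.univ).toReal

/-- The normalized duality mapping `J : C[0,1] ⇉ rca[0,1]`:
`J(f) = {ν : ⟨ν, f⟩ = ‖ν‖‖f‖ = ‖f‖² = ‖ν‖²}`. -/
noncomputable def JsetC (f : C(I01, ℝ)) : Set (SignedMeasure I01) :=
  {ν | sInt ν (fun s => f s) = ‖f‖ ^ 2 ∧ tvNorm ν = ‖f‖}

/-- The maximizing set `M(f) = {t ∈ [0,1] : |f(t)| = ‖f‖}`. -/
def maxSet (f : C(I01, ℝ)) : Set I01 := {t | |f t| = ‖f‖}

/-- `λ ∈ D̂*J(f, μ)(Φ)`: the regular (Fréchet) coderivative condition for the set-valued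
normalized duality mapping `J` on `C[0,1]`, i.e.
`limsup_{(g,γ)→(f,μ), γ∈J(g)} (⟨λ, g−f⟩ − ⟨Φ, γ−μ⟩)/(‖g−f‖ + ‖γ−μ‖) ≤ 0`. -/
noncomputable def memMDC (f : C(I01, ℝ)) (μ : SignedMeasure I01)
    (Φ : SignedMeasure I01 → ℝ) (lam : SignedMeasure I01) : Prop :=
  ∀ ε > (0 : ℝ), ∃ δ > (0 : ℝ), ∀ (g : C(I01, ℝ)) (γ : SignedMeasure I01),
    γ ∈ JsetC g → ‖g - f‖ < δ → tvNorm (γ - μ) < δ →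
    (sInt lam (fun s => g s - f s) - Φ (γ - μ)) / (‖g - f‖ + tvNorm (γ - μ)) ≤ ε

/-! Both `J` and the coderivative quotient are homogeneous: `J(c • g) ⊇ c • J(g)` for every real
`c`, and along the ray `g_t = (1 - t) • f`, `γ_t = (1 - t) • μ` the numerator of the quotient is
`t‖f‖²` while each of the two terms of the denominator is `t‖f‖`. The quotient is therefore the
constant `‖f‖ / 2`, whereas membership of `0` in the coderivative forces every such limit along
graph points of `J` converging to `(f, μ)` to be `≤ 0`. -/

namespace MeasureTheory.SignedMeasure

variable {α : Type*} [MeasurableSpace α]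

theorem totalVariation_smul_of_nonneg {r : ℝ} (hr : 0 ≤ r) (s : SignedMeasure α) :
    (r • s).totalVariation = r.toNNReal • s.totalVariation := by
  rw [totalVariation, totalVariation, toJordanDecomposition_smul_real,
    JordanDecomposition.real_smul_posPart_nonneg _ _ hr,
    JordanDecomposition.real_smul_negPart_nonneg _ _ hr, smul_add]

theorem totalVariation_smul (r : ℝ) (s : SignedMeasure α) :
    (r • s).totalVariation = ‖r‖₊ • s.totalVariation := by
  rcases le_or_gt 0 r with hr | hr
  · rw [totalVariation_smul_of_nonneg hr, Real.nnnorm_of_nonneg hr, Real.toNNReal_of_nonneg hr]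
  · have hr' : 0 ≤ -r := by linarith
    rw [show r • s = -((-r) • s) by ext i hi; simp, totalVariation_neg, ← nnnorm_neg r,
      totalVariation_smul_of_nonneg hr', Real.nnnorm_of_nonneg hr', Real.toNNReal_of_nonneg hr']

end MeasureTheory.SignedMeasure

theorem tvNorm_smul (r : ℝ) (ν : SignedMeasure I01) : tvNorm (r • ν) = |r| * tvNorm ν := by
  rw [tvNorm, tvNorm, SignedMeasure.totalVariation_smul, Measure.smul_apply, ENNReal.toReal_smul,
    NNReal.smul_def, coe_nnnorm, Real.norm_eq_abs, smul_eq_mul]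

theorem sInt_zero_measure (f : I01 → ℝ) : sInt 0 f = 0 := by
  simp [sInt, SignedMeasure.toJordanDecomposition_zero]

theorem sInt_smul_measure (r : ℝ) (ν : SignedMeasure I01) (f : I01 → ℝ) :
    sInt (r • ν) f = r * sInt ν f := by
  unfold sInt
  rw [SignedMeasure.toJordanDecomposition_smul_real]
  rcases le_or_gt 0 r with hr | hr
  · rw [JordanDecomposition.real_smul_posPart_nonneg _ _ hr,
      JordanDecomposition.real_smul_negPart_nonneg _ _ hr,
      integral_smul_nnreal_measure, integral_smul_nnreal_measure, NNReal.smul_def,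
      NNReal.smul_def, Real.coe_toNNReal _ hr, smul_eq_mul, smul_eq_mul, mul_sub]
  · rw [JordanDecomposition.real_smul_posPart_neg _ _ hr,
      JordanDecomposition.real_smul_negPart_neg _ _ hr,
      integral_smul_nnreal_measure, integral_smul_nnreal_measure, NNReal.smul_def,
      NNReal.smul_def, Real.coe_toNNReal _ (by linarith), smul_eq_mul, smul_eq_mul]
    ring

theorem sInt_const_mul (c : ℝ) (ν : SignedMeasure I01) (f : I01 → ℝ) :
    sInt ν (fun s => c * f s) = c * sInt ν f := by
  rw [sInt, sInt, integral_const_mul, integral_const_mul, mul_sub]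

theorem smul_mem_JsetC (c : ℝ) {g : C(I01, ℝ)} {γ : SignedMeasure I01} (h : γ ∈ JsetC g) :
    c • γ ∈ JsetC (c • g) := by
  obtain ⟨hpair, hnorm⟩ := h
  have hcg : ‖c • g‖ = |c| * ‖g‖ := by rw [norm_smul, Real.norm_eq_abs]
  refine ⟨?_, ?_⟩
  · simp only [ContinuousMap.smul_apply, smul_eq_mul]
    rw [sInt_smul_measure, sInt_const_mul, hpair, hcg, mul_pow, sq_abs]
    ring
  · rw [tvNorm_smul, hnorm, hcg]

theorem memMDC.nonpos_of_tendsto {f : C(I01, ℝ)} {μ : SignedMeasure I01}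
    {Φ : SignedMeasure I01 → ℝ} {lam : SignedMeasure I01} (h : memMDC f μ Φ lam)
    {ι : Type*} {l : Filter ι} [l.NeBot] {g : ι → C(I01, ℝ)} {γ : ι → SignedMeasure I01} {L : ℝ}
    (hJ : ∀ᶠ i in l, γ i ∈ JsetC (g i))
    (hg : Filter.Tendsto (fun i => ‖g i - f‖) l (𝓝 0))
    (hγ : Filter.Tendsto (fun i => tvNorm (γ i - μ)) l (𝓝 0))
    (hL : Filter.Tendsto (fun i => (sInt lam (fun s => g i s - f s) - Φ (γ i - μ)) /
      (‖g i - f‖ + tvNorm (γ i - μ))) l (𝓝 L)) :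
    L ≤ 0 := by
  refine le_of_forall_pos_le_add fun ε hε => ?_
  obtain ⟨δ, hδ, H⟩ := h ε hε
  rw [zero_add]
  refine le_of_tendsto hL ?_
  filter_upwards [hJ, hg.eventually (gt_mem_nhds hδ), hγ.eventually (gt_mem_nhds hδ)]
    with i hi hgi hγi using H _ _ hi hgi hγi

theorem norm_ray_sub (f : C(I01, ℝ)) (t : ℝ) : ‖(1 - t) • f - f‖ = |t| * ‖f‖ := by
  rw [show (1 - t) • f - f = (-t) • f by module, norm_smul, Real.norm_eq_abs, abs_neg]

section Ray

variable {f : C(I01, ℝ)} {μ : SignedMeasure I01}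

theorem sInt_ray_sub (hμ : μ ∈ JsetC f) (t : ℝ) :
    sInt ((1 - t) • μ - μ) (fun s => f s) = -(t * ‖f‖ ^ 2) := by
  rw [show (1 - t) • μ - μ = (-t) • μ by module, sInt_smul_measure, hμ.1, neg_mul]

theorem tvNorm_ray_sub (hμ : μ ∈ JsetC f) (t : ℝ) :
    tvNorm ((1 - t) • μ - μ) = |t| * ‖f‖ := by
  rw [show (1 - t) • μ - μ = (-t) • μ by module, tvNorm_smul, hμ.2, abs_neg]

theorem ray_quotient_eq (hμ : μ ∈ JsetC f) {t : ℝ} (ht : 0 < t) :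
    -(sInt ((1 - t) • μ - μ) (fun s => f s)) /
      (‖(1 - t) • f - f‖ + tvNorm ((1 - t) • μ - μ)) = ‖f‖ / 2 := by
  rw [sInt_ray_sub hμ, norm_ray_sub, tvNorm_ray_sub hμ, abs_of_pos ht, neg_neg]
  rcases eq_or_ne ‖f‖ 0 with hf | hf
  · simp [hf]
  · field_simp
    ring

end Ray

theorem zero_not_mem_coderivative_C01_general (f : C(I01, ℝ)) (hf : 0 < ‖f‖)
    (μ : SignedMeasure I01) (hμ : μ ∈ JsetC f) :
    Filter.Tendsto
      (fun t : ℝ =>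
        (-(sInt ((1 - t) • μ - μ) (fun s => f s))) /
          (‖(1 - t) • f - f‖ + tvNorm ((1 - t) • μ - μ)))
      (𝓝[>] 0) (𝓝 (‖f‖ / 2)) ∧
    0 < ‖f‖ / 2 ∧
    ¬ memMDC f μ (fun γ => sInt γ (fun s => f s)) 0 := by
  have hquot : Filter.Tendsto
      (fun t : ℝ => -(sInt ((1 - t) • μ - μ) (fun s => f s)) /
        (‖(1 - t) • f - f‖ + tvNorm ((1 - t) • μ - μ))) (𝓝[>] 0) (𝓝 (‖f‖ / 2)) :=
    tendsto_const_nhds.congr' <| eventually_nhdsWithin_of_forall fun t ht =>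
      (ray_quotient_eq hμ ht).symm
  have hray : Filter.Tendsto (fun t : ℝ => |t| * ‖f‖) (𝓝[>] 0) (𝓝 0) :=
    ((continuous_abs.mul continuous_const).tendsto' 0 0 (by simp)).mono_left nhdsWithin_le_nhds
  refine ⟨hquot, half_pos hf, fun hmem => ?_⟩
  have hnonpos := hmem.nonpos_of_tendsto (g := fun t => (1 - t) • f) (γ := fun t => (1 - t) • μ)
    (Filter.Eventually.of_forall fun t => smul_mem_JsetC _ hμ)
    (by simpa only [norm_ray_sub] using hray) (by simpa only [tvNorm_ray_sub hμ] using hray)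
    (by simpa only [sInt_zero_measure, zero_sub] using hquot)
  linarith [half_pos hf]

/-- let `f ∈ C[0,1]`, `f ≥ 0`, `‖f‖ > 0`, `μ ∈ J(f)`, and let
`f** : γ ↦ ∫ f dγ` on `rca[0,1]`.  Then `θ* ∉ D̂*J(f, μ)(f**)`: with `g_t = (1−t)f` and
`γ_t = (1−t)μ ∈ J(g_t)`, the quotient `(−⟨γ_t − μ, f⟩)/(‖g_t − f‖ + ‖γ_t − μ‖)`
converges to `‖f‖/2 > 0` as `t ↓ 0`. -/
theorem zero_not_mem_coderivative_C01 (f : C(I01, ℝ)) (hf : 0 < ‖f‖)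
    (hfpos : ∀ s : I01, 0 ≤ f s)
    (μ : SignedMeasure I01) (hμ : μ ∈ JsetC f) :
    Filter.Tendsto
      (fun t : ℝ =>
        (-(sInt ((1 - t) • μ - μ) (fun s => f s))) /
          (‖(1 - t) • f - f‖ + tvNorm ((1 - t) • μ - μ)))
      (𝓝[>] 0) (𝓝 (‖f‖ / 2)) ∧
    0 < ‖f‖ / 2 ∧
    ¬ memMDC f μ (fun γ => sInt γ (fun s => f s)) 0 :=
  zero_not_mem_coderivative_C01_general f hf μ hμ
end
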